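/- arXiv:0903.5350 — 4 statements merged into one kernel-verified Lean document; each statement's English description precedes it below -/
import Mathlib

section
/- Let s ≥ 2, t ≥ 2, and 0 ≤ k ≤ s − 2 be integers, and let G(A,B) be a bipartite graph with (finite) parts A and B. Suppose that G contains no copy of K_{s,t} with a vertex class of size s contained in A and a vertex class of size t contained in B; that is, there are no sets S ⊆ A with |S| = s and T ⊆ B with |T| = t such that every vertex of S is adjacent to every vertex of T. Then the number of edges of G is at most (s − k − 1)^(1/t) · |B| · |A|^(1 − 1/t) + (t − 1) · |A|^(1 + k/t) + k·|B|. -/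
/-!
Let `m = |A|`, `n = |B|`, `d(b)` the degree of `b ∈ B`, and `M(K) ⊆ B` the common neighbourhood
of `K ⊆ A`. Fix a `k`-set `K`. A `t`-set `T ⊆ M(K)` lies in `M(K ∪ {a})` for fewer than `s - k`
vertices `a ∉ K`, since `K` and `s - k` such vertices would span a `K_{s,t}` with `T`. Hence
`∑_{a ∉ K} C(|M(K ∪ {a})|, t) ≤ (s-k-1) C(|M(K)|, t)`, and the power mean inequality applied to
`(x - t + 1)₊^t ≤ t! C(x, t)` gives `∑_{b ∈ M(K)} (d(b) - k - Q) ≤ (m-k)(t-1)` with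
`Q = (s-k-1)^{1/t} (m-k)^{1-1/t}`. Summed over all `K`, each `b` is weighted by `C(d(b), k)`. As
`d - k - Q` and `C(d, k) - C(q, k)` have the same sign for `q = ⌈k + Q⌉`, the weights can be
replaced by the constant `C(q, k)`, and `C(m, k) ≤ (m-k)^{k/t} C(q, k)` then yields
`∑_b d(b) ≤ n(k + Q) + (t-1)(m-k)^{1+k/t}`.
-/

open Finset

lemma le_rpow_mul_of_pow_le {x c N M : ℝ} {t : ℕ} (ht : t ≠ 0) (hc : 0 ≤ c)
    (hN : 0 ≤ N) (hM : 0 ≤ M) (h : x ^ t ≤ N ^ (t - 1) * c * M ^ t) :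
    x ≤ c ^ (1 / t : ℝ) * N ^ (1 - 1 / t : ℝ) * M := by
  refine le_of_pow_le_pow_left₀ ht (by positivity) (h.trans_eq ?_)
  have hNt : (N ^ (1 - 1 / t : ℝ)) ^ t = N ^ (t - 1) := by
    rw [← Real.rpow_natCast, ← Real.rpow_mul hN, ← Real.rpow_natCast,
      Nat.cast_sub (Nat.one_le_iff_ne_zero.2 ht)]
    congr 1
    field_simp
    simp
  rw [mul_pow, mul_pow, hNt, one_div, Real.rpow_inv_natCast_pow hc ht]
  ring

lemma sum_cast_le_of_sum_choose_le {ι : Type*} (S : Finset ι) (f : ι → ℕ) {t c M : ℕ}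
    (ht : t ≠ 0) (h : ∑ a ∈ S, (f a).choose t ≤ c * M.choose t) :
    ∑ a ∈ S, (f a : ℝ)
      ≤ #S * ((t : ℝ) - 1) + (c : ℝ) ^ (1 / t : ℝ) * (#S : ℝ) ^ (1 - 1 / t : ℝ) * M := by
  set X : ι → ℕ := fun a => f a + 1 - t
  have hpow : ∑ a ∈ S, X a ^ t ≤ c * M ^ t :=
    calc ∑ a ∈ S, X a ^ t ≤ ∑ a ∈ S, t.factorial * (f a).choose t :=
          sum_le_sum fun a _ => (Nat.pow_sub_le_descFactorial _ _).trans_eq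
            (Nat.descFactorial_eq_factorial_mul_choose _ _)
      _ ≤ t.factorial * (c * M.choose t) := by rw [← mul_sum]; exact Nat.mul_le_mul_left _ h
      _ = c * M.descFactorial t := by rw [Nat.descFactorial_eq_factorial_mul_choose]; ring
      _ ≤ c * M ^ t := Nat.mul_le_mul_left _ (Nat.descFactorial_le_pow _ _)
  have hmean : (∑ a ∈ S, X a) ^ t ≤ #S ^ (t - 1) * c * M ^ t := by
    obtain ⟨t, rfl⟩ := Nat.exists_eq_succ_of_ne_zero ht
    rw [mul_assoc]
    exact (pow_sum_le_card_mul_sum_pow (fun _ _ => Nat.zero_le _) t).trans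
      (Nat.mul_le_mul_left _ hpow)
  have hroot : ∑ a ∈ S, (X a : ℝ) ≤ (c : ℝ) ^ (1 / t : ℝ) * (#S : ℝ) ^ (1 - 1 / t : ℝ) * M :=
    le_rpow_mul_of_pow_le ht (by positivity) (by positivity) (by positivity)
      (by exact_mod_cast hmean)
  have hfX : ∀ a ∈ S, (f a : ℝ) ≤ ((t : ℝ) - 1) + X a := fun a _ => by
    have : f a + 1 ≤ t + X a := by simp only [X]; omega
    have := (Nat.cast_le (α := ℝ)).2 this
    push_cast at this
    linarith
  calc ∑ a ∈ S, (f a : ℝ) ≤ ∑ a ∈ S, (((t : ℝ) - 1) + X a) := sum_le_sum hfX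
    _ = #S * ((t : ℝ) - 1) + ∑ a ∈ S, (X a : ℝ) := by
        rw [sum_add_distrib, sum_const, nsmul_eq_mul]
    _ ≤ _ := by gcongr

lemma cast_choose_ceil_mul_sum_sub_le {ι : Type*} (S : Finset ι) (d : ι → ℕ) (k : ℕ) (x : ℝ) :
    (⌈x⌉₊.choose k : ℝ) * ∑ i ∈ S, ((d i : ℝ) - x)
      ≤ ∑ i ∈ S, ((d i).choose k : ℝ) * ((d i : ℝ) - x) := by
  rw [mul_sum]
  refine sum_le_sum fun i _ => ?_
  rcases le_or_gt ⌈x⌉₊ (d i) with h | h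
  · have hx : x ≤ d i := (Nat.le_ceil x).trans (by exact_mod_cast h)
    exact mul_le_mul_of_nonneg_right (by exact_mod_cast Nat.choose_le_choose k h) (by linarith)
  · have hx : (d i : ℝ) < x := Nat.lt_ceil.1 h
    exact mul_le_mul_of_nonpos_right (by exact_mod_cast Nat.choose_le_choose k h.le) (by linarith)

lemma cast_choose_le_pow_mul_cast_choose {v : ℝ} (hv : 1 ≤ v) {m q k : ℕ}
    (h : (m : ℝ) - k ≤ v * ((q : ℝ) - k)) : (m.choose k : ℝ) ≤ v ^ k * q.choose k := by
  rcases lt_or_ge m k with hmk | hkm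
  · rw [Nat.choose_eq_zero_of_lt hmk, Nat.cast_zero]
    positivity
  have hkq : k ≤ q := by
    by_contra! hqk
    have : (q : ℝ) < k := by exact_mod_cast hqk
    have : (k : ℝ) ≤ m := by exact_mod_cast hkm
    nlinarith
  have hdesc : (m.descFactorial k : ℝ) ≤ v ^ k * q.descFactorial k := by
    simp only [Nat.descFactorial_eq_prod_range, Nat.cast_prod]
    calc ∏ i ∈ range k, ((m - i : ℕ) : ℝ) ≤ ∏ i ∈ range k, (v * ((q - i : ℕ) : ℝ)) := by
          refine prod_le_prod (fun _ _ => Nat.cast_nonneg _) fun i hi => ?_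
          have hik : i < k := mem_range.1 hi
          have : (i : ℝ) ≤ k := by exact_mod_cast hik.le
          rw [Nat.cast_sub (by omega), Nat.cast_sub (by omega)]
          nlinarith
      _ = v ^ k * ∏ i ∈ range k, ((q - i : ℕ) : ℝ) := by
          rw [prod_mul_distrib, prod_const, card_range]
  simp only [Nat.descFactorial_eq_factorial_mul_choose, Nat.cast_mul] at hdesc
  rw [mul_left_comm] at hdesc
  exact le_of_mul_le_mul_left hdesc (by positivity)

section Bipartite

variable {α β : Type*} [Fintype β] (r : α → β → Prop) [∀ a b, Decidable (r a b)]

def HasBiclique (s t : ℕ) : Prop :=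
  ∃ (S : Finset α) (T : Finset β), #S = s ∧ #T = t ∧ ∀ a ∈ S, ∀ b ∈ T, r a b

def commonNbhd (K : Finset α) : Finset β :=
  univ.filter fun b => ∀ a ∈ K, r a b

variable {r}

@[simp]
lemma mem_commonNbhd {K : Finset α} {b : β} : b ∈ commonNbhd r K ↔ ∀ a ∈ K, r a b := by
  simp [commonNbhd]

lemma commonNbhd_insert [DecidableEq α] (a : α) (K : Finset α) :
    commonNbhd r (insert a K) = (commonNbhd r K).filter (r a ·) := by
  ext b
  simp [and_comm]

variable [Fintype α] (r)

lemma card_filter_eq_sum_card_bipartiteBelow [DecidablePred fun p : α × β => r p.1 p.2] :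
    #(univ.filter fun p : α × β => r p.1 p.2) = ∑ b, #(univ.bipartiteBelow r b) := by
  rw [card_filter, Fintype.sum_prod_type_right]
  simp only [bipartiteBelow, card_filter]
  congr!

lemma sum_card_commonNbhd_insert [DecidableEq α] (K : Finset α) :
    ∑ a, #(commonNbhd r (insert a K)) = ∑ b ∈ commonNbhd r K, #(univ.bipartiteBelow r b) := by
  simp_rw [commonNbhd_insert]
  exact sum_card_bipartiteAbove_eq_sum_card_bipartiteBelow r

lemma sum_powersetCard_sum_commonNbhd {M : Type*} [AddCommMonoid M] (k : ℕ) (g : β → M) :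
    ∑ K ∈ powersetCard k univ, ∑ b ∈ commonNbhd r K, g b
      = ∑ b, (#(univ.bipartiteBelow r b)).choose k • g b := by
  rw [sum_comm' (t' := univ) (s' := fun b => powersetCard k (univ.bipartiteBelow r b))]
  · simp only [sum_const, card_powersetCard]
  · intro K b
    simp [mem_powersetCard, subset_iff, bipartiteBelow, and_comm]

variable {r}

lemma card_add_card_lt_of_not_hasBiclique [DecidableEq α] {s t : ℕ}
    (hfree : ¬ HasBiclique r s t) {K : Finset α} (hKs : #K ≤ s) {T : Finset β}
    (hT : T ⊆ commonNbhd r K) (hTt : #T = t) :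
    #((univ \ K).filter fun a => ∀ b ∈ T, r a b) + #K < s := by
  by_contra! h
  obtain ⟨S, hS, hSs⟩ := exists_subset_card_eq
    (s := (univ \ K).filter fun a => ∀ b ∈ T, r a b) (n := s - #K) (by omega)
  have hdisj : Disjoint K S :=
    disjoint_of_subset_right (hS.trans (filter_subset _ _)) disjoint_sdiff
  refine hfree ⟨K ∪ S, T, by rw [card_union_of_disjoint hdisj]; omega, hTt, fun a ha b hb => ?_⟩
  rcases mem_union.1 ha with ha | ha
  · exact mem_commonNbhd.1 (hT hb) a ha
  · exact (mem_filter.1 (hS ha)).2 b hb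

lemma sum_choose_card_commonNbhd_insert_le [DecidableEq α] {s t : ℕ}
    (hfree : ¬ HasBiclique r s t) {K : Finset α} (hKs : #K ≤ s) :
    ∑ a ∈ univ \ K, (#(commonNbhd r (insert a K))).choose t
      ≤ (s - #K - 1) * (#(commonNbhd r K)).choose t := by
  have hsub : ∀ a, powersetCard t (commonNbhd r (insert a K))
      = (powersetCard t (commonNbhd r K)).bipartiteAbove (fun a T => ∀ b ∈ T, r a b) a := by
    intro a
    ext T
    simp only [bipartiteAbove, mem_filter, mem_powersetCard, commonNbhd_insert, subset_iff,
      imp_and, forall_and]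
    tauto
  simp_rw [← card_powersetCard, hsub]
  rw [sum_card_bipartiteAbove_eq_sum_card_bipartiteBelow, mul_comm]
  refine sum_le_card_nsmul _ _ _ fun T hT => ?_
  have := card_add_card_lt_of_not_hasBiclique hfree hKs (mem_powersetCard.1 hT).1
    (mem_powersetCard.1 hT).2
  simp only [bipartiteBelow]
  omega

lemma sum_card_bipartiteBelow_sub_le [DecidableEq α] {s t : ℕ} (hfree : ¬ HasBiclique r s t)
    (ht : t ≠ 0) {K : Finset α} (hKs : #K ≤ s) :
    ∑ b ∈ commonNbhd r K, ((#(univ.bipartiteBelow r b) : ℝ)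
        - (#K + ((s - #K - 1 : ℕ) : ℝ) ^ (1 / t : ℝ) * (#(univ \ K) : ℝ) ^ (1 - 1 / t : ℝ)))
      ≤ #(univ \ K) * ((t : ℝ) - 1) := by
  have hsplit : ∑ b ∈ commonNbhd r K, (#(univ.bipartiteBelow r b) : ℝ)
      = ∑ a ∈ univ \ K, (#(commonNbhd r (insert a K)) : ℝ) + #K * #(commonNbhd r K) := by
    have hK : ∑ a ∈ K, #(commonNbhd r (insert a K)) = #K * #(commonNbhd r K) :=
      sum_const_nat fun a ha => by rw [insert_eq_of_mem ha]
    have h := sum_card_commonNbhd_insert r K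
    rw [← sum_sdiff (subset_univ K), hK] at h
    exact_mod_cast h.symm
  have hbound := sum_cast_le_of_sum_choose_le (univ \ K) (fun a => #(commonNbhd r (insert a K)))
    ht (sum_choose_card_commonNbhd_insert_le hfree hKs)
  rw [sum_sub_distrib, sum_const, nsmul_eq_mul, hsplit]
  linarith

lemma sum_choose_card_bipartiteBelow_mul_sub_le [DecidableEq α] {s t k : ℕ}
    (hfree : ¬ HasBiclique r s t) (ht : t ≠ 0) (hks : k ≤ s) :
    ∑ b, ((#(univ.bipartiteBelow r b)).choose k : ℝ) * (#(univ.bipartiteBelow r b)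
        - (k + ((s - k - 1 : ℕ) : ℝ) ^ (1 / t : ℝ)
          * ((Fintype.card α - k : ℕ) : ℝ) ^ (1 - 1 / t : ℝ)))
      ≤ (Fintype.card α).choose k * ((Fintype.card α - k : ℕ) * ((t : ℝ) - 1)) := by
  have h := sum_powersetCard_sum_commonNbhd r k fun b => (#(univ.bipartiteBelow r b) : ℝ)
    - (k + ((s - k - 1 : ℕ) : ℝ) ^ (1 / t : ℝ) * ((Fintype.card α - k : ℕ) : ℝ) ^ (1 - 1 / t : ℝ))
  simp only [nsmul_eq_mul] at h
  rw [← h]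
  calc _ ≤ ∑ K ∈ powersetCard k univ, ((Fintype.card α - k : ℕ) * ((t : ℝ) - 1)) :=
        sum_le_sum fun K hK => ?_
    _ = _ := by rw [sum_const, card_powersetCard, card_univ, nsmul_eq_mul]
  have hKk := (mem_powersetCard.1 hK).2
  have := sum_card_bipartiteBelow_sub_le hfree ht (K := K) (hKk ▸ hks)
  rwa [card_univ_sdiff, hKk] at this

lemma sum_card_bipartiteBelow_le [DecidableEq α] {s t k : ℕ} (hfree : ¬ HasBiclique r s t)
    (ht : t ≠ 0) (hks : k + 2 ≤ s) (hkm : k < Fintype.card α) :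
    ∑ b, (#(univ.bipartiteBelow r b) : ℝ)
      ≤ ((s - k - 1 : ℕ) : ℝ) ^ (1 / t : ℝ) * Fintype.card β
          * ((Fintype.card α - k : ℕ) : ℝ) ^ (1 - 1 / t : ℝ)
        + ((t : ℝ) - 1) * ((Fintype.card α - k : ℕ) : ℝ) ^ (1 + (k : ℝ) / t)
        + k * Fintype.card β := by
  set N : ℝ := ((Fintype.card α - k : ℕ) : ℝ) with hN_def
  set c : ℝ := ((s - k - 1 : ℕ) : ℝ)
  set Q := c ^ (1 / t : ℝ) * N ^ (1 - 1 / t : ℝ)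
  set q := ⌈(k : ℝ) + Q⌉₊
  have hN : 1 ≤ N := Nat.one_le_cast.2 (by omega)
  have hc : 1 ≤ c := Nat.one_le_cast.2 (by omega)
  have ht1 : (1 : ℝ) ≤ t := Nat.one_le_cast.2 (Nat.one_le_iff_ne_zero.2 ht)
  have hv : 1 ≤ N ^ (1 / t : ℝ) := Real.one_le_rpow hN (by positivity)
  have hQ : N ^ (1 - 1 / t : ℝ) ≤ Q :=
    le_mul_of_one_le_left (by positivity) (Real.one_le_rpow hc (by positivity))
  have hq : (k : ℝ) + Q ≤ q := Nat.le_ceil _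
  have hchoose : ((Fintype.card α).choose k : ℝ) ≤ (N ^ (1 / t : ℝ)) ^ k * q.choose k := by
    refine cast_choose_le_pow_mul_cast_choose hv ?_
    have : (Fintype.card α : ℝ) - k = N ^ (1 / t : ℝ) * N ^ (1 - 1 / t : ℝ) := by
      rw [← Real.rpow_add (by linarith), add_sub_cancel, Real.rpow_one, hN_def,
        Nat.cast_sub hkm.le]
    rw [this]
    gcongr
    linarith
  have hqk : 0 < (q.choose k : ℝ) := by
    have : (k : ℝ) ≤ q := by linarith [show 0 ≤ Q by positivity]
    exact_mod_cast Nat.choose_pos (by exact_mod_cast this)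
  have hsum := (cast_choose_ceil_mul_sum_sub_le univ (fun b => #(univ.bipartiteBelow r b)) k
    (k + Q)).trans ((sum_choose_card_bipartiteBelow_mul_sub_le hfree ht (by omega)).trans
      (mul_le_mul_of_nonneg_right hchoose (mul_nonneg (by linarith) (by linarith))))
  rw [mul_assoc, mul_left_comm] at hsum
  have hsum' := le_of_mul_le_mul_left hsum hqk
  have hpow : (N ^ (1 / t : ℝ)) ^ k * (N * ((t : ℝ) - 1))
      = ((t : ℝ) - 1) * N ^ (1 + (k : ℝ) / t) := by
    rw [← Real.rpow_natCast, ← Real.rpow_mul (by linarith), Real.rpow_one_add' (by linarith)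
      (by positivity)]
    ring_nf
  rw [sum_sub_distrib, sum_const, card_univ, nsmul_eq_mul, hpow] at hsum'
  linarith

end Bipartite

/-- **Theorem 3 (bipartite form of the Zarankiewicz bound).**
Let `s ≥ 2`, `t ≥ 2`, `0 ≤ k ≤ s - 2`, and let `G(A,B)` be a bipartite graph with
parts `A` (type `α`) and `B` (type `β`), encoded by the relation `r`. If `G` contains
no copy of `K_{s,t}` with a class of size `s` in `A` and a class of size `t` in `B`,
then `G` has at most `(s-k-1)^(1/t) |B| |A|^(1-1/t) + (t-1) |A|^(1+k/t) + k |B|` edges. -/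
theorem zarankiewicz_bipartite_bound
    {α β : Type*} [Fintype α] [Fintype β]
    (s t k : ℕ) (hs : 2 ≤ s) (ht : 2 ≤ t) (hk : k ≤ s - 2)
    (r : α → β → Prop) [∀ a b, Decidable (r a b)]
    [DecidablePred fun p : α × β => r p.1 p.2]
    (hfree : ¬ ∃ (S : Finset α) (T : Finset β),
        S.card = s ∧ T.card = t ∧ ∀ a ∈ S, ∀ b ∈ T, r a b) :
    ((Finset.univ.filter fun p : α × β => r p.1 p.2).card : ℝ) ≤
      ((s : ℝ) - k - 1) ^ ((1 : ℝ) / t) * (Fintype.card β)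
          * (Fintype.card α : ℝ) ^ (1 - (1 : ℝ) / t)
        + ((t : ℝ) - 1) * (Fintype.card α : ℝ) ^ (1 + (k : ℝ) / t)
        + k * (Fintype.card β) := by
  classical
  have hks : k + 2 ≤ s := by omega
  have hc : ((s - k - 1 : ℕ) : ℝ) = s - k - 1 := by
    rw [Nat.sub_sub, Nat.cast_sub (by omega)]
    push_cast
    ring
  have hc0 : (0 : ℝ) ≤ s - k - 1 := by rw [← hc]; positivity
  have ht1 : (0 : ℝ) ≤ t - 1 := by
    rw [sub_nonneg]
    exact Nat.one_le_cast.2 (by omega)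
  rw [card_filter_eq_sum_card_bipartiteBelow, Nat.cast_sum]
  rcases le_or_gt (Fintype.card α) k with hmk | hkm
  · have hdeg : ∑ b, (#(univ.bipartiteBelow r b) : ℝ) ≤ ∑ _b : β, (k : ℝ) :=
      sum_le_sum fun b _ => Nat.cast_le.2 ((card_le_univ _).trans hmk)
    rw [sum_const, card_univ, nsmul_eq_mul] at hdeg
    have : 0 ≤ ((s : ℝ) - k - 1) ^ ((1 : ℝ) / t) * (Fintype.card β)
        * (Fintype.card α : ℝ) ^ (1 - (1 : ℝ) / t) := by positivity
    have : 0 ≤ ((t : ℝ) - 1) * (Fintype.card α : ℝ) ^ (1 + (k : ℝ) / t) := by positivity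
    linarith
  · have hN : ((Fintype.card α - k : ℕ) : ℝ) ≤ Fintype.card α := Nat.cast_le.2 (Nat.sub_le _ _)
    refine (sum_card_bipartiteBelow_le hfree (by omega) hks hkm).trans ?_
    rw [hc]
    gcongr
    exact sub_nonneg.2 (div_le_one_of_le₀ (by linarith) (by positivity))
end

section
/- Let s ≥ 2 be an integer and let G be a K_{s,2}-free simple graph on n ≥ 1 vertices. Then every eigenvalue μ of the adjacency matrix of G satisfies μ ≤ 1/2 + sqrt((s − 1)(n − 1) + 1/4). In particular, the spectral radius of G satisfies this bound. -/
open Finset Matrix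

/-!
Put `x = |v|`. The triangle inequality gives `|μ| • x ≤ A *ᵥ x` entrywise, hence also
`|μ| (A x)_u ≤ (A² x)_u`. At a vertex `u` where `x` is maximal,
`(A² x)_u - (A x)_u = ∑_{y ≠ u} (A_{uy} (x_u - x_y) + (A²)_{uy} x_y)`, and since the graph is
`K_{s,2}`-free the codegree `(A²)_{uy}` is at most `s - 1`, so every summand is at most
`(s - 1) x_u`. Comparing the two estimates yields `|μ|² - |μ| ≤ (s - 1)(n - 1)`, and solving
this quadratic inequality gives the bound.
-/

theorem abs_smul_abs_le_mulVec_abs {ι : Type*} [Fintype ι] {M : Matrix ι ι ℝ}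
    (hM : ∀ i j, 0 ≤ M i j) {μ : ℝ} {v : ι → ℝ} (hv : M *ᵥ v = μ • v) :
    |μ| • |v| ≤ M *ᵥ |v| := fun i =>
  calc |μ| * |v i| = |(M *ᵥ v) i| := by rw [hv, Pi.smul_apply, smul_eq_mul, abs_mul]
    _ ≤ ∑ j, |M i j * v j| := abs_sum_le_sum_abs _ _
    _ = (M *ᵥ |v|) i := by
      simp only [abs_mul, abs_of_nonneg (hM _ _), mulVec, dotProduct, Pi.abs_apply]

theorem mulVec_le_mulVec_of_nonneg {ι : Type*} [Fintype ι] {M : Matrix ι ι ℝ}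
    (hM : ∀ i j, 0 ≤ M i j) {x y : ι → ℝ} (hxy : x ≤ y) : M *ᵥ x ≤ M *ᵥ y := fun i =>
  sum_le_sum fun j _ => mul_le_mul_of_nonneg_left (hxy j) (hM i j)

theorem sq_sub_le_of_smul_le_mulVec {ι : Type*} [Fintype ι] {M : Matrix ι ι ℝ}
    (hM : ∀ i j, 0 ≤ M i j) {a K : ℝ} {x : ι → ℝ} (ha : 0 ≤ a) (hK : 0 ≤ K)
    (hx : a • x ≤ M *ᵥ x) {u : ι} (hxu : 0 < x u)
    (hu : ((M * M) *ᵥ x) u - (M *ᵥ x) u ≤ K * x u) :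
    a ^ 2 - a ≤ K := by
  have h2 : a * (M *ᵥ x) u ≤ ((M * M) *ᵥ x) u := by
    rw [← mulVec_mulVec, ← smul_eq_mul, ← Pi.smul_apply, ← mulVec_smul]
    exact mulVec_le_mulVec_of_nonneg hM hx u
  have h1 : a * x u ≤ (M *ᵥ x) u := hx u
  -- for `a ≥ 1`: `(a² - a) x_u ≤ (a - 1) (M x)_u ≤ (M² x)_u - (M x)_u`
  rcases le_or_gt 1 a with h | h <;> nlinarith

theorem le_half_add_sqrt_of_sq_sub_le {a C : ℝ} (h : a ^ 2 - a ≤ C) :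
    a ≤ 1 / 2 + √(C + 1 / 4) := by
  have : |a - 1 / 2| ≤ √(C + 1 / 4) := Real.abs_le_sqrt (by nlinarith)
  linarith [le_abs_self (a - 1 / 2)]

namespace SimpleGraph

variable {V : Type*} (G : SimpleGraph V) [DecidableRel G.Adj]

theorem adjMatrix_nonneg (i j : V) : 0 ≤ G.adjMatrix ℝ i j := by
  rw [adjMatrix_apply]; split_ifs <;> norm_num

variable [Fintype V]

theorem card_commonNeighbors_lt {s : ℕ}
    (hfree : ¬ ∃ (S T : Finset V), Disjoint S T ∧ S.card = s ∧ T.card = 2 ∧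
        ∀ a ∈ S, ∀ b ∈ T, G.Adj a b)
    {u y : V} (huy : u ≠ y) : #{w ∈ G.neighborFinset u | G.Adj w y} < s := by
  classical
  by_contra! hs
  obtain ⟨S, hS, rfl⟩ := exists_subset_card_eq hs
  have hST : ∀ a ∈ S, ∀ b ∈ ({u, y} : Finset V), G.Adj a b := by
    intro a ha b hb
    have ha := mem_filter.mp (hS ha)
    rcases mem_insert.mp hb with rfl | hb
    · exact ((G.mem_neighborFinset _ _).mp ha.1).symm
    · exact mem_singleton.mp hb ▸ ha.2
  refine hfree ⟨S, {u, y}, Finset.disjoint_left.mpr fun a ha hb => G.irrefl (hST a ha a hb),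
    rfl, card_pair huy, hST⟩

theorem adjMatrix_mul_self_apply_le {s : ℕ}
    (hfree : ¬ ∃ (S T : Finset V), Disjoint S T ∧ S.card = s ∧ T.card = 2 ∧
        ∀ a ∈ S, ∀ b ∈ T, G.Adj a b)
    {u y : V} (huy : u ≠ y) : (G.adjMatrix ℝ * G.adjMatrix ℝ) u y ≤ s - 1 := by
  have := G.card_commonNeighbors_lt hfree huy
  rw [adjMatrix_mul_apply]
  simp only [adjMatrix_apply, sum_boole]
  rw [le_sub_iff_add_le]
  exact_mod_cast this

theorem adjMatrix_mul_self_mulVec_sub_mulVec_apply [DecidableEq V] (x : V → ℝ) (u : V) :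
    ((G.adjMatrix ℝ * G.adjMatrix ℝ) *ᵥ x) u - (G.adjMatrix ℝ *ᵥ x) u =
      ∑ y ∈ univ.erase u, (G.adjMatrix ℝ u y * (x u - x y) +
        (G.adjMatrix ℝ * G.adjMatrix ℝ) u y * x y) := by
  rw [sum_erase_eq_sub (mem_univ u)]
  simp only [mul_sub, sum_add_distrib, sum_sub_distrib, ← sum_mul, mulVec, dotProduct,
    adjMatrix_mul_self_apply_self]
  simp [← card_neighborFinset_eq_degree, neighborFinset_eq_filter]
  ring

theorem adjMatrix_mul_self_mulVec_sub_mulVec_le {s : ℕ} (hs : 2 ≤ s)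
    (hfree : ¬ ∃ (S T : Finset V), Disjoint S T ∧ S.card = s ∧ T.card = 2 ∧
        ∀ a ∈ S, ∀ b ∈ T, G.Adj a b)
    {x : V → ℝ} (hx : 0 ≤ x) {u : V} (hu : ∀ y, x y ≤ x u) :
    ((G.adjMatrix ℝ * G.adjMatrix ℝ) *ᵥ x) u - (G.adjMatrix ℝ *ᵥ x) u ≤
      ((s : ℝ) - 1) * (Fintype.card V - 1) * x u := by
  classical
  rw [adjMatrix_mul_self_mulVec_sub_mulVec_apply]
  calc _ ≤ ∑ y ∈ univ.erase u, ((s : ℝ) - 1) * x u := sum_le_sum fun y hy => ?_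
    _ = _ := by
      rw [sum_const, card_erase_of_mem (mem_univ u), card_univ, nsmul_eq_mul,
        Nat.cast_pred (Fintype.card_pos_iff.mpr ⟨u⟩)]
      ring
  have hA0 := G.adjMatrix_nonneg u y
  have hA1 : G.adjMatrix ℝ u y ≤ 1 := by rw [adjMatrix_apply]; split_ifs <;> norm_num
  have hc0 : 0 ≤ (G.adjMatrix ℝ * G.adjMatrix ℝ) u y :=
    sum_nonneg fun w _ => mul_nonneg (G.adjMatrix_nonneg u w) (G.adjMatrix_nonneg w y)
  have hc := G.adjMatrix_mul_self_apply_le hfree (ne_of_mem_erase hy).symm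
  have hs' : (2 : ℝ) ≤ s := by exact_mod_cast hs
  have hxy := sub_nonneg.mpr (hu y)
  -- `A_{uy} (x_u - x_y) + (A²)_{uy} x_y ≤ x_u + (s - 2) x_y ≤ (s - 1) x_u`
  nlinarith [mul_nonneg (sub_nonneg.mpr hA1) hxy, mul_nonneg (sub_nonneg.mpr hc) (hx y),
    mul_nonneg (sub_nonneg.mpr hs') hxy]

end SimpleGraph

theorem spectral_Ks2_free_bound_general
    {V : Type*} [Fintype V]
    (s n : ℕ) (hs : 2 ≤ s)
    (G : SimpleGraph V) [DecidableRel G.Adj]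
    (hcard : Fintype.card V = n)
    (hfree : ¬ ∃ (S T : Finset V), Disjoint S T ∧ S.card = s ∧ T.card = 2 ∧
        ∀ a ∈ S, ∀ b ∈ T, G.Adj a b)
    (μ : ℝ) (v : V → ℝ) (hv : v ≠ 0)
    (hμ : (G.adjMatrix ℝ).mulVec v = μ • v) :
    μ ≤ 1 / 2 + Real.sqrt (((s : ℝ) - 1) * ((n : ℝ) - 1) + 1 / 4) := by
  obtain ⟨i, hi⟩ := Function.ne_iff.mp hv
  have : Nonempty V := ⟨i⟩
  obtain ⟨u, hu⟩ := Finite.exists_max |v|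
  have hvu : 0 < |v| u := (abs_pos.mpr hi).trans_le (hu i)
  have hn : (1 : ℝ) ≤ n := by rw [← hcard]; exact_mod_cast Fintype.card_pos
  have hs' : (2 : ℝ) ≤ s := by exact_mod_cast hs
  have hμ2 : |μ| ^ 2 - |μ| ≤ ((s : ℝ) - 1) * ((n : ℝ) - 1) :=
    sq_sub_le_of_smul_le_mulVec G.adjMatrix_nonneg (abs_nonneg μ) (by nlinarith)
      (abs_smul_abs_le_mulVec_abs G.adjMatrix_nonneg hμ) hvu
      (hcard ▸ G.adjMatrix_mul_self_mulVec_sub_mulVec_le hs hfree (abs_nonneg v) hu)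
  exact (le_abs_self μ).trans (le_half_add_sqrt_of_sq_sub_le hμ2)

/-- **Theorem 1, case `t = 2`.** If `G` is a `K_{s,2}`-free graph on `n ≥ 1` vertices
with `s ≥ 2`, then every eigenvalue `μ` of its adjacency matrix satisfies
`μ ≤ 1/2 + sqrt((s-1)(n-1) + 1/4)`. -/
theorem spectral_Ks2_free_bound
    {V : Type*} [Fintype V] [DecidableEq V]
    (s n : ℕ) (hs : 2 ≤ s) (hn : 1 ≤ n)
    (G : SimpleGraph V) [DecidableRel G.Adj]
    (hcard : Fintype.card V = n)
    (hfree : ¬ ∃ (S T : Finset V), Disjoint S T ∧ S.card = s ∧ T.card = 2 ∧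
        ∀ a ∈ S, ∀ b ∈ T, G.Adj a b)
    (μ : ℝ) (v : V → ℝ) (hv : v ≠ 0)
    (hμ : (G.adjMatrix ℝ).mulVec v = μ • v) :
    μ ≤ 1 / 2 + Real.sqrt (((s : ℝ) - 1) * ((n : ℝ) - 1) + 1 / 4) :=
  spectral_Ks2_free_bound_general s n hs G hcard hfree μ v hv hμ
end

section
/- Let s ≥ 3, t ≥ 3, and 0 ≤ k ≤ s − 2 be integers. Then there exist real numbers A = A(s,t,k) > 0 and B = B(s,t,k) > 0 and a threshold N such that for all integers n, m ≥ N satisfying A · m^((k+1)/t) ≤ n ≤ B · m^((k+2)/t), one has (s − k − 1)^(1/t) · n · m^(1 − 1/t) + (t − 1) · m^(1 + k/t) + k·n < (s − i − 1)^(1/t) · n · m^(1 − 1/t) + (t − 1) · m^(1 + i/t) + i·n for every integer i with 0 ≤ i ≤ s − 2 and i ≠ k. -/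
open Finset

set_option maxHeartbeats 1000000 in
/-- **Proposition (usefulness of the parameter `k`).** For `s ≥ 3`, `t ≥ 3` and
`0 ≤ k ≤ s - 2` there exist `A, B > 0` and a threshold `N` such that for all
`m, n ≥ N` with `A m^((k+1)/t) ≤ n ≤ B m^((k+2)/t)`, the bound with parameter `k`
is strictly smaller than the bound with any other parameter `i ∈ [0, s-2]`, `i ≠ k`. -/
theorem zarankiewicz_param_optimal
    (s t k : ℕ) (hs : 3 ≤ s) (ht : 3 ≤ t) (hk : k ≤ s - 2) :
    ∃ A B : ℝ, 0 < A ∧ 0 < B ∧ ∃ N : ℕ,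
      ∀ m n : ℕ, N ≤ m → N ≤ n →
        A * (m : ℝ) ^ (((k : ℝ) + 1) / t) ≤ n →
        (n : ℝ) ≤ B * (m : ℝ) ^ (((k : ℝ) + 2) / t) →
        ∀ i : ℕ, i ≤ s - 2 → i ≠ k →
          ((s : ℝ) - k - 1) ^ ((1 : ℝ) / t) * n * (m : ℝ) ^ (1 - (1 : ℝ) / t)
              + ((t : ℝ) - 1) * (m : ℝ) ^ (1 + (k : ℝ) / t) + k * n
            < ((s : ℝ) - i - 1) ^ ((1 : ℝ) / t) * n * (m : ℝ) ^ (1 - (1 : ℝ) / t)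
              + ((t : ℝ) - 1) * (m : ℝ) ^ (1 + (i : ℝ) / t) + i * n := by
  have ht0 : (0:ℝ) < t := by exact_mod_cast (by omega : 0 < t)
  have hts : (3:ℝ) ≤ t := by exact_mod_cast ht
  have hks : k + 2 ≤ s := by omega
  have hksR : (k:ℝ) + 2 ≤ s := by exact_mod_cast hks
  have hsk1 : (1:ℝ) ≤ (s:ℝ) - k - 1 := by linarith
  have hs0 : (0:ℝ) < s := by exact_mod_cast (by omega : 0 < s)
  set δ : ℝ := ((s:ℝ) - k) ^ ((1:ℝ)/t) - ((s:ℝ) - k - 1) ^ ((1:ℝ)/t) with hδdef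
  have hδ : 0 < δ := by
    have := Real.rpow_lt_rpow (by linarith : (0:ℝ) ≤ (s:ℝ) - k - 1)
      (by linarith : (s:ℝ) - k - 1 < (s:ℝ) - k) (by positivity : (0:ℝ) < (1:ℝ)/t)
    simpa [hδdef, sub_pos] using this
  have hδA : δ * (2*(t:ℝ)/δ) = 2*(t:ℝ) := by field_simp
  have hδB : δ * (2*(s:ℝ)/δ) = 2*(s:ℝ) := by field_simp
  clear_value δ
  refine ⟨2*t/δ, 1/(2*(s:ℝ)^((1:ℝ)/t)), by positivity, by positivity, ?_⟩
  obtain ⟨N0, hN0⟩ := exists_nat_ge ((2*s/δ)^2)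
  refine ⟨max (2^t) (N0+1), ?_⟩
  intro m n hm hn hA hB i hi hik
  have hm2t : (2:ℕ)^t ≤ m := le_trans (le_max_left _ _) hm
  have hmN0 : (N0:ℝ) + 1 ≤ m := by exact_mod_cast le_trans (le_max_right _ _) hm
  have hm1 : (1:ℝ) ≤ m := by
    have : 1 ≤ m := le_trans (Nat.one_le_two_pow) hm2t
    exact_mod_cast this
  have hm0 : (0:ℝ) < m := by linarith
  have hn0 : (0:ℝ) ≤ n := by positivity
  -- m^(1/t) ≥ 2
  have hmt2 : (2:ℝ) ≤ (m:ℝ) ^ ((1:ℝ)/t) := by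
    have h1 : ((2:ℝ)^(t:ℝ)) ^ ((1:ℝ)/t) ≤ (m:ℝ) ^ ((1:ℝ)/t) := by
      apply Real.rpow_le_rpow (by positivity) _ (by positivity)
      have h2 : ((2:ℕ)^t : ℝ) ≤ m := by exact_mod_cast hm2t
      rwa [show ((2:ℕ)^t : ℝ) = (2:ℝ)^(t:ℝ) by push_cast [Real.rpow_natCast]; norm_num] at h2
    rwa [← Real.rpow_mul (by norm_num) (t:ℝ) ((1:ℝ)/t), mul_one_div,
      div_self (ne_of_gt ht0), Real.rpow_one] at h1
  -- m^(1-1/t) ≥ 2s/δ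
  have hM2s : 2*(s:ℝ)/δ ≤ (m:ℝ) ^ (1 - (1:ℝ)/t) := by
    have hsqle : (2*s/δ)^2 ≤ (m:ℝ) := by linarith
    have h2 : 2*(s:ℝ)/δ ≤ (m:ℝ) ^ ((1:ℝ)/2) := by
      have := Real.le_sqrt_of_sq_le hsqle
      rwa [Real.sqrt_eq_rpow] at this
    refine le_trans h2 (Real.rpow_le_rpow_of_exponent_le hm1 ?_)
    have h13 : (1:ℝ)/t ≤ 1/3 := by
      rw [div_le_div_iff₀ ht0 (by norm_num)]; linarith
    linarith
  -- exponent product identities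
  have hmul1 : (m:ℝ)^(((k:ℝ)+2)/t) * (m:ℝ)^(1-(1:ℝ)/t) = (m:ℝ)^(1+((k:ℝ)+1)/t) := by
    rw [← Real.rpow_add hm0]; congr 1; field_simp; ring
  have hmul2 : (m:ℝ)^(((k:ℝ)+1)/t) * (m:ℝ)^(1-(1:ℝ)/t) = (m:ℝ)^(1+(k:ℝ)/t) := by
    rw [← Real.rpow_add hm0]; congr 1; field_simp; ring
  have hmul3 : (m:ℝ)^(1+(k:ℝ)/t) * (m:ℝ)^((1:ℝ)/t) = (m:ℝ)^(1+((k:ℝ)+1)/t) := by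
    rw [← Real.rpow_add hm0]; congr 1; field_simp; ring
  set X : ℝ := (m:ℝ)^(1+((k:ℝ)+1)/t) with hXdef
  set Y : ℝ := (m:ℝ)^(1+(k:ℝ)/t) with hYdef
  set M : ℝ := (m:ℝ)^(1-(1:ℝ)/t) with hMdef
  set Z : ℝ := (m:ℝ)^(1+(i:ℝ)/t) with hZdef
  have hX0 : 0 < X := Real.rpow_pos_of_pos hm0 _
  have hY0 : 0 < Y := Real.rpow_pos_of_pos hm0 _
  have hM0 : 0 < M := Real.rpow_pos_of_pos hm0 _
  have hZ0 : 0 < Z := Real.rpow_pos_of_pos hm0 _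
  have h2YX : 2*Y ≤ X := by
    calc 2*Y ≤ (m:ℝ)^((1:ℝ)/t) * Y := by nlinarith
    _ = X := by rw [mul_comm]; exact hmul3
  have his : i + 2 ≤ s := by omega
  have hisR : (i:ℝ) + 2 ≤ s := by exact_mod_cast his
  set ck : ℝ := ((s:ℝ) - k - 1) ^ ((1:ℝ)/t) with hckdef
  set ci : ℝ := ((s:ℝ) - i - 1) ^ ((1:ℝ)/t) with hcidef
  have hci0 : 0 ≤ ci := Real.rpow_nonneg (by linarith) _
  have hck0 : 0 ≤ ck := Real.rpow_nonneg (by linarith) _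
  have hnM0 : 0 ≤ (n:ℝ) * M := mul_nonneg hn0 hM0.le
  have htZ0 : 0 ≤ ((t:ℝ)-1) * Z := mul_nonneg (by linarith) hZ0.le
  clear_value X Y M Z ck ci
  rcases lt_or_gt_of_ne hik with hlt | hgt
  · -- i < k : ci ≥ ck + δ
    have hciδ : ck + δ ≤ ci := by
      have h3 : ((s:ℝ) - k) ^ ((1:ℝ)/t) ≤ ci := by
        rw [hcidef]
        apply Real.rpow_le_rpow (by linarith) _ (by positivity)
        have : (i:ℝ) + 1 ≤ k := by exact_mod_cast hlt
        linarith
      simp only [hδdef]; linarith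
    have hsplit : (ck + δ) * ((n:ℝ)*M) ≤ ci * ((n:ℝ)*M) :=
      mul_le_mul_of_nonneg_right hciδ hnM0
    have hnM : (2*t/δ) * Y ≤ (n:ℝ) * M := by
      calc (2*t/δ) * Y = (2*t/δ) * (m:ℝ)^(((k:ℝ)+1)/t) * M := by
            rw [mul_assoc, hmul2]
      _ ≤ (n:ℝ) * M := mul_le_mul_of_nonneg_right hA hM0.le
    have hδnM1 : 2*(t:ℝ)*Y ≤ δ * ((n:ℝ)*M) := by
      have h4 := mul_le_mul_of_nonneg_left hnM hδ.le
      calc 2*(t:ℝ)*Y = (δ * (2*(t:ℝ)/δ)) * Y := by rw [hδA]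
      _ = δ * ((2*t/δ) * Y) := by ring
      _ ≤ δ * ((n:ℝ)*M) := h4
    have hδnM2 : 2*(s:ℝ)*(n:ℝ) ≤ δ * ((n:ℝ)*M) := by
      have h5 := mul_le_mul_of_nonneg_left (mul_le_mul_of_nonneg_left hM2s hn0) hδ.le
      calc 2*(s:ℝ)*(n:ℝ) = (δ * (2*(s:ℝ)/δ)) * n := by rw [hδB]
      _ = δ * ((n:ℝ) * (2*s/δ)) := by ring
      _ ≤ δ * ((n:ℝ)*M) := h5
    have hksR2 : (k:ℝ) ≤ s := by linarith
    have hkns : (k:ℝ) * n ≤ (s:ℝ) * n :=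
      mul_le_mul_of_nonneg_right hksR2 hn0
    have hin0 : (0:ℝ) ≤ (i:ℝ) * n := by positivity
    linarith [hY0, hsplit, hδnM1, hδnM2, hkns, hin0, htZ0]
  · -- i > k
    have hcick : ci ≤ ck := by
      have hkiR : (k:ℝ) ≤ i := by exact_mod_cast hgt.le
      rw [hcidef, hckdef]
      exact Real.rpow_le_rpow (by linarith) (by linarith) (by positivity)
    have hckS : ck ≤ (s:ℝ)^((1:ℝ)/t) := by
      rw [hckdef]
      exact Real.rpow_le_rpow (by linarith) (by linarith) (by positivity)
    have hs1t : (0:ℝ) < (s:ℝ)^((1:ℝ)/t) := Real.rpow_pos_of_pos hs0 _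
    have hnMX : (n:ℝ) * M ≤ (1/(2*(s:ℝ)^((1:ℝ)/t))) * X := by
      calc (n:ℝ) * M ≤ (1/(2*(s:ℝ)^((1:ℝ)/t))) * (m:ℝ)^(((k:ℝ)+2)/t) * M :=
            mul_le_mul_of_nonneg_right hB hM0.le
      _ = (1/(2*(s:ℝ)^((1:ℝ)/t))) * X := by rw [mul_assoc, hmul1]
    have hckB : ck * ((n:ℝ)*M) ≤ (1/2) * X := by
      calc ck * ((n:ℝ)*M) ≤ (s:ℝ)^((1:ℝ)/t) * ((1/(2*(s:ℝ)^((1:ℝ)/t))) * X) :=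
            mul_le_mul hckS hnMX hnM0 hs1t.le
      _ = (1/2) * X := by field_simp
    have hmiX : X ≤ Z := by
      rw [hXdef, hZdef]
      apply Real.rpow_le_rpow_of_exponent_le hm1
      have hki1 : (k:ℝ) + 1 ≤ i := by exact_mod_cast hgt
      gcongr
    have hkin : (k:ℝ) * n ≤ (i:ℝ) * n := by
      have : (k:ℝ) ≤ i := by exact_mod_cast hgt.le
      exact mul_le_mul_of_nonneg_right this hn0
    have htX : ((t:ℝ)-1) * (2*Y) ≤ ((t:ℝ)-1) * X :=
      mul_le_mul_of_nonneg_left h2YX (by linarith)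
    have h3X : 3 * X ≤ (t:ℝ) * X := mul_le_mul_of_nonneg_right hts hX0.le
    have htXZ : ((t:ℝ)-1) * X ≤ ((t:ℝ)-1) * Z :=
      mul_le_mul_of_nonneg_left hmiX (by linarith)
    have hcin : 0 ≤ ci * ((n:ℝ) * M) := mul_nonneg hci0 hnM0
    linarith [hckB, htX, h3X, htXZ, hkin, hcin, hX0]
end

section
/- Let s ≥ 2 and d be positive integers, and let G be a d-regular simple graph on n ≥ 2 vertices in which every two distinct vertices have exactly s − 1 common neighbors. Then d = 1/2 + sqrt((s − 1)(n − 1) + 1/4); equivalently, the spectral radius μ of G (which equals d) attains equality in the bound μ ≤ 1/2 + sqrt((s − 1)(n − 1) + 1/4) for K_{s,2}-free graphs. -/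
open Finset

/-- **Tightness of the `t = 2` bound.** If `G` is a `d`-regular graph on `n ≥ 2`
vertices in which every two distinct vertices have exactly `s - 1` common neighbors
(`s ≥ 2`, `d ≥ 1`), then `d = 1/2 + sqrt((s-1)(n-1) + 1/4)`; i.e., the spectral
radius `d` attains equality in the `K_{s,2}`-free bound. -/
theorem regular_common_neighbors_spectral_equality
    {V : Type*} [Fintype V] [DecidableEq V]
    (s d n : ℕ) (hs : 2 ≤ s) (hd : 0 < d) (hn : 2 ≤ n)
    (G : SimpleGraph V) [DecidableRel G.Adj]
    (hcard : Fintype.card V = n)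
    (hreg : G.IsRegularOfDegree d)
    (hcommon : ∀ u v : V, u ≠ v →
        (G.neighborFinset u ∩ G.neighborFinset v).card = s - 1) :
    (d : ℝ) = 1 / 2 + Real.sqrt (((s : ℝ) - 1) * ((n : ℝ) - 1) + 1 / 4) := by
  obtain ⟨u⟩ : Nonempty V := by
    rw [← Fintype.card_pos_iff, hcard]; omega
  -- double counting
  have key : d * (d - 1) = (n - 1) * (s - 1) := by
    have h1 : ∑ v ∈ univ.erase u, (G.neighborFinset u ∩ G.neighborFinset v).card
        = (n - 1) * (s - 1) := by
      rw [Finset.sum_congr rfl (fun v hv => hcommon u v (Ne.symm (Finset.ne_of_mem_erase hv)))]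
      simp [Finset.card_erase_of_mem, hcard]
    have h2 : ∑ v ∈ univ.erase u, (G.neighborFinset u ∩ G.neighborFinset v).card
        = d * (d - 1) := by
      have step : ∀ v : V, (G.neighborFinset u ∩ G.neighborFinset v).card
          = ∑ w ∈ G.neighborFinset u, if v ∈ G.neighborFinset w then 1 else 0 := by
        intro v
        rw [← Finset.sum_filter, Finset.sum_const, smul_eq_mul, mul_one]
        apply congrArg Finset.card
        ext w
        simp only [Finset.mem_filter, Finset.mem_inter, SimpleGraph.mem_neighborFinset]
        constructor
        · rintro ⟨h1, h2⟩; exact ⟨h1, h2.symm⟩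
        · rintro ⟨h1, h2⟩; exact ⟨h1, h2.symm⟩
      rw [Finset.sum_congr rfl (fun v _ => step v), Finset.sum_comm]
      have inner : ∀ w ∈ G.neighborFinset u,
          (∑ v ∈ univ.erase u, if v ∈ G.neighborFinset w then 1 else 0) = d - 1 := by
        intro w hw
        rw [← Finset.sum_filter]
        have hu : u ∈ G.neighborFinset w := by
          rw [SimpleGraph.mem_neighborFinset] at hw ⊢
          exact hw.symm
        have : (univ.erase u).filter (· ∈ G.neighborFinset w)
            = (G.neighborFinset w).erase u := by
          ext v
          simp [Finset.mem_erase, Finset.mem_filter, and_comm]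
        rw [this]
        simp [Finset.card_erase_of_mem hu, hreg w]
      rw [Finset.sum_congr rfl inner, Finset.sum_const, smul_eq_mul,
        SimpleGraph.card_neighborFinset_eq_degree, hreg u]
    omega
  -- now the real algebra
  have hne : ((s : ℝ) - 1) * ((n : ℝ) - 1) + 1 / 4 = ((d : ℝ) - 1 / 2) ^ 2 := by
    have hcast : (d : ℝ) * ((d : ℝ) - 1) = ((n : ℝ) - 1) * ((s : ℝ) - 1) := by
      have := congrArg (fun k : ℕ => (k : ℝ)) key
      push_cast [Nat.cast_sub (by omega : 1 ≤ d), Nat.cast_sub (by omega : 1 ≤ n),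
        Nat.cast_sub (by omega : 1 ≤ s)] at this
      linarith [this]
    ring_nf
    ring_nf at hcast
    linarith
  rw [hne, Real.sqrt_sq (by
    have : (1 : ℝ) ≤ (d : ℝ) := by exact_mod_cast hd
    linarith)]
  ring
end
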